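/- If P has a capacity-constrained learning representation, then P has a capacity-constrained learning representation whose feasible set is the collection of revealed experiments 𝒬* = {Q_i^P : i ∈ D}, in which each decision problem i is represented by the pair (Q_i^P, q_i^P) of revealed experiment and revealed action strategy. -/

import Mathlib

open Finset
open scoped Classical

noncomputable section

variable {Ω 𝒜 D X : Type*}

/-- `P` is state-dependent stochastic choice (SDSC) data for prior `μ` and action sets `A`
(extended by `0` outside `A i`). -/
def IsSDSC [Fintype Ω] (μ : Ω → ℝ) (A : D → Finset 𝒜) (P : D → 𝒜 → Ω → ℝ) : Prop :=
  (∀ i a ω, 0 ≤ P i a ω) ∧ (∀ i a ω, P i a ω ≤ 1) ∧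
    (∀ i a ω, a ∉ A i → P i a ω = 0) ∧ ∀ i ω, ∑ a ∈ A i, P i a ω = μ ω

/-- `μ` is a full-support prior probability on `Ω`. -/
def IsPrior [Fintype Ω] (μ : Ω → ℝ) : Prop := (∀ ω, 0 < μ ω) ∧ ∑ ω, μ ω = 1

/-- No Improving (Action or Attention) Switches. -/
def NIS [Fintype Ω] (u : X → ℝ) (A : D → Finset 𝒜) (hA : ∀ i, (A i).Nonempty)
    (x : D → 𝒜 → Ω → X) (P : D → 𝒜 → Ω → ℝ) : Prop :=
  ∀ i j : D, ∑ a ∈ A i, ∑ ω, P i a ω * u (x i a ω) ≥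
    ∑ a ∈ A j, (A i).sup' (hA i) fun a' => ∑ ω, P j a ω * u (x i a' ω)

/-- An information structure: a finitely supported probability distribution over posteriors
on `Ω` that is Bayes-consistent with the prior `μ`. -/
structure InfoStruct (Ω : Type*) [Fintype Ω] (μ : Ω → ℝ) where
  Q : (Ω → ℝ) → ℝ
  finite_support : (Function.support Q).Finite
  nonneg : ∀ γ, 0 ≤ Q γ
  posterior_nonneg : ∀ γ ∈ Function.support Q, ∀ ω, 0 ≤ γ ω
  posterior_sum_one : ∀ γ ∈ Function.support Q, ∑ ω, γ ω = 1
  mass_one : ∑ γ ∈ finite_support.toFinset, Q γ = 1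
  bayes : ∀ ω, ∑ γ ∈ finite_support.toFinset, Q γ * γ ω = μ ω

/-- An action strategy for `Qs` on action set `A`. -/
def IsStrategy [Fintype Ω] {μ : Ω → ℝ} (Qs : InfoStruct Ω μ) (A : Finset 𝒜)
    (q : (Ω → ℝ) → 𝒜 → ℝ) : Prop :=
  ∀ γ ∈ Function.support Qs.Q,
    (∀ a, 0 ≤ q γ a) ∧ (∀ a ∉ A, q γ a = 0) ∧ ∑ a ∈ A, q γ a = 1

/-- The SDSC generated by the strategy `(Qs, q)`. -/
def genSDSC [Fintype Ω] {μ : Ω → ℝ} (Qs : InfoStruct Ω μ) (q : (Ω → ℝ) → 𝒜 → ℝ)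
    (a : 𝒜) (ω : Ω) : ℝ :=
  ∑ γ ∈ Qs.finite_support.toFinset, q γ a * Qs.Q γ * γ ω

/-- Posterior expected utility `U(a | γ, x)`. -/
def postEU [Fintype Ω] (u : X → ℝ) (x : 𝒜 → Ω → X) (a : 𝒜) (γ : Ω → ℝ) : ℝ :=
  ∑ ω, γ ω * u (x a ω)

/-- Gross expected utility `g(Q, q | x)`. -/
def gross [Fintype Ω] {μ : Ω → ℝ} (u : X → ℝ) (Qs : InfoStruct Ω μ) (A : Finset 𝒜)
    (q : (Ω → ℝ) → 𝒜 → ℝ) (x : 𝒜 → Ω → X) : ℝ :=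
  ∑ γ ∈ Qs.finite_support.toFinset, ∑ a ∈ A, Qs.Q γ * q γ a * postEU u x a γ

/-- Indirect expected utility `G(Q | A, x)`: the maximal gross expected utility over
action strategies for `Qs` on `A`. -/
def indirect [Fintype Ω] {μ : Ω → ℝ} (u : X → ℝ) (Qs : InfoStruct Ω μ)
    (A : Finset 𝒜) (x : 𝒜 → Ω → X) : ℝ :=
  sSup {r | ∃ q, IsStrategy Qs A q ∧ gross u Qs A q x = r}

/-- Marginal choice probability `P_i(a)`. -/
def margP [Fintype Ω] (P : D → 𝒜 → Ω → ℝ) (i : D) (a : 𝒜) : ℝ := ∑ ω, P i a ω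

/-- Revealed posterior `γ_i^a`. -/
def revPost [Fintype Ω] (P : D → 𝒜 → Ω → ℝ) (i : D) (a : 𝒜) : Ω → ℝ :=
  fun ω => P i a ω / margP P i a

/-- The revealed experiment `Q_i^P`, as a mass function on posteriors. -/
def revExpFun [Fintype Ω] (P : D → 𝒜 → Ω → ℝ) (A : D → Finset 𝒜) (i : D)
    (γ : Ω → ℝ) : ℝ :=
  ∑ a ∈ (A i).filter (fun a => 0 < margP P i a ∧ revPost P i a = γ), margP P i a

/-- The revealed action strategy `q_i^P`. -/
def revStrat [Fintype Ω] (P : D → 𝒜 → Ω → ℝ) (A : D → Finset 𝒜) (i : D)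
    (γ : Ω → ℝ) (a : 𝒜) : ℝ :=
  if 0 < margP P i a ∧ revPost P i a = γ then margP P i a / revExpFun P A i γ else 0

/-- `P` has a capacity-constrained learning representation. -/
def CCR [Fintype Ω] (u : X → ℝ) (μ : Ω → ℝ) (A : D → Finset 𝒜)
    (x : D → 𝒜 → Ω → X) (P : D → 𝒜 → Ω → ℝ) : Prop :=
  ∃ (𝒬 : Set (InfoStruct Ω μ)) (Qi : D → InfoStruct Ω μ) (qi : D → (Ω → ℝ) → 𝒜 → ℝ),
    ∀ i : D, Qi i ∈ 𝒬 ∧ IsStrategy (Qi i) (A i) (qi i) ∧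
      (∀ a ∈ A i, ∀ ω, genSDSC (Qi i) (qi i) a ω = P i a ω) ∧
      gross u (Qi i) (A i) (qi i) (x i) = indirect u (Qi i) (A i) (x i) ∧
      ∀ Q ∈ 𝒬, indirect u (Qi i) (A i) (x i) ≥ indirect u Q (A i) (x i)

/-! The indirect utility of an information structure is `∑ γ, Q(γ) · max_a U(a | γ)`, and gross
utility depends on a strategy only through the SDSC it generates. The revealed pair `(Q_i^P, q_i^P)`
generates `P_i`, and `Q_j^P` is a garbling of any `Q_j` that generates `P_j`, so by convexity of
`γ ↦ max_a U(a | γ)` it is worth no more than `Q_j` in any decision problem. Hence `Q_i^P` attains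
the optimal value `G(Q_i | A_i, x_i)` with the strategy `q_i^P`, and every `Q_j^P` is worth at most
`G(Q_j | A_i, x_i) ≤ G(Q_i | A_i, x_i)` in problem `i`. -/

section InfoStruct

variable [Fintype Ω] {μ : Ω → ℝ} (u : X → ℝ)

lemma sum_genSDSC_mul (Qs : InfoStruct Ω μ) (q : (Ω → ℝ) → 𝒜 → ℝ) (a : 𝒜) (v : Ω → ℝ) :
    ∑ ω, genSDSC Qs q a ω * v ω =
      ∑ γ ∈ Qs.finite_support.toFinset, q γ a * Qs.Q γ * ∑ ω, γ ω * v ω := by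
  simp only [genSDSC, Finset.sum_mul, Finset.mul_sum]
  rw [Finset.sum_comm]
  exact Finset.sum_congr rfl fun _ _ => Finset.sum_congr rfl fun _ _ => by ring

lemma gross_eq_sum_genSDSC (Qs : InfoStruct Ω μ) (B : Finset 𝒜) (q : (Ω → ℝ) → 𝒜 → ℝ)
    (x : 𝒜 → Ω → X) :
    gross u Qs B q x = ∑ a ∈ B, ∑ ω, genSDSC Qs q a ω * u (x a ω) := by
  simp only [sum_genSDSC_mul, gross, postEU]
  rw [Finset.sum_comm]
  exact Finset.sum_congr rfl fun _ _ => Finset.sum_congr rfl fun _ _ => by ring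

lemma gross_congr_of_genSDSC_eq {Qs Qs' : InfoStruct Ω μ} {B : Finset 𝒜}
    {q q' : (Ω → ℝ) → 𝒜 → ℝ} (h : ∀ a ∈ B, ∀ ω, genSDSC Qs q a ω = genSDSC Qs' q' a ω)
    (x : 𝒜 → Ω → X) :
    gross u Qs B q x = gross u Qs' B q' x := by
  simp only [gross_eq_sum_genSDSC]
  exact Finset.sum_congr rfl fun a ha => Finset.sum_congr rfl fun ω _ => by rw [h a ha ω]

lemma gross_le_sum_sup' (Qs : InfoStruct Ω μ) {B : Finset 𝒜} (hB : B.Nonempty)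
    {q : (Ω → ℝ) → 𝒜 → ℝ} (hq : IsStrategy Qs B q) (x : 𝒜 → Ω → X) :
    gross u Qs B q x ≤
      ∑ γ ∈ Qs.finite_support.toFinset, Qs.Q γ * B.sup' hB (postEU u x · γ) := by
  refine Finset.sum_le_sum fun γ hγ => ?_
  obtain ⟨hq_nonneg, -, hq_sum⟩ := hq γ ((Set.Finite.mem_toFinset _).1 hγ)
  calc ∑ a ∈ B, Qs.Q γ * q γ a * postEU u x a γ
      ≤ ∑ a ∈ B, Qs.Q γ * q γ a * B.sup' hB (postEU u x · γ) :=
        Finset.sum_le_sum fun a ha => mul_le_mul_of_nonneg_left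
          (Finset.le_sup' (postEU u x · γ) ha) (mul_nonneg (Qs.nonneg γ) (hq_nonneg a))
    _ = Qs.Q γ * B.sup' hB (postEU u x · γ) := by
        rw [← Finset.sum_mul, ← Finset.mul_sum, hq_sum, mul_one]

lemma exists_gross_eq_sum_sup' (Qs : InfoStruct Ω μ) {B : Finset 𝒜} (hB : B.Nonempty)
    (x : 𝒜 → Ω → X) :
    ∃ q, IsStrategy Qs B q ∧ gross u Qs B q x =
      ∑ γ ∈ Qs.finite_support.toFinset, Qs.Q γ * B.sup' hB (postEU u x · γ) := by
  choose b hbB hb_max using fun γ : Ω → ℝ => Finset.exists_mem_eq_sup' hB (postEU u x · γ)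
  refine ⟨fun γ => Pi.single (b γ) 1, fun γ _ => ⟨fun a => ?_, fun a ha => ?_, ?_⟩, ?_⟩
  · by_cases h : a = b γ <;> simp [h]
  · exact Pi.single_eq_of_ne (by rintro rfl; exact ha (hbB γ)) _
  · simp [hbB γ]
  · refine Finset.sum_congr rfl fun γ _ => ?_
    rw [hb_max γ, Finset.sum_eq_single_of_mem (b γ) (hbB γ) fun a _ h => by simp [h]]
    simp

lemma indirect_eq_sum_sup' (Qs : InfoStruct Ω μ) {B : Finset 𝒜} (hB : B.Nonempty)
    (x : 𝒜 → Ω → X) :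
    indirect u Qs B x =
      ∑ γ ∈ Qs.finite_support.toFinset, Qs.Q γ * B.sup' hB (postEU u x · γ) := by
  obtain ⟨q, hq, hgross⟩ := exists_gross_eq_sum_sup' u Qs hB x
  refine IsGreatest.csSup_eq ⟨⟨q, hq, hgross⟩, ?_⟩
  rintro _ ⟨q', hq', rfl⟩
  exact gross_le_sum_sup' u Qs hB hq' x

lemma gross_le_indirect (Qs : InfoStruct Ω μ) {B : Finset 𝒜} (hB : B.Nonempty)
    {q : (Ω → ℝ) → 𝒜 → ℝ} (hq : IsStrategy Qs B q) (x : 𝒜 → Ω → X) :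
    gross u Qs B q x ≤ indirect u Qs B x :=
  (gross_le_sum_sup' u Qs hB hq x).trans_eq (indirect_eq_sum_sup' u Qs hB x).symm

end InfoStruct

section Revealed

variable [Fintype Ω] {μ : Ω → ℝ} {P : D → 𝒜 → Ω → ℝ} {A : D → Finset 𝒜} {i : D}

lemma margP_mul_revPost (hP : ∀ ω, 0 ≤ P i a ω) (ω : Ω) :
    margP P i a * revPost P i a ω = P i a ω := by
  by_cases h : margP P i a = 0
  · have hzero := (Finset.sum_eq_zero_iff_of_nonneg fun ω _ => hP ω).1 h ω (Finset.mem_univ ω)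
    simp [h, hzero]
  · exact mul_div_cancel₀ _ h

lemma revExpFun_nonneg (γ : Ω → ℝ) : 0 ≤ revExpFun P A i γ :=
  Finset.sum_nonneg fun _ ha => (Finset.mem_filter.1 ha).2.1.le

lemma margP_le_revExpFun_revPost (ha : a ∈ A i) (hpos : 0 < margP P i a) :
    margP P i a ≤ revExpFun P A i (revPost P i a) :=
  Finset.single_le_sum (f := margP P i) (fun _ hb => (Finset.mem_filter.1 hb).2.1.le)
    (Finset.mem_filter.2 ⟨ha, hpos, rfl⟩)

variable {Qr : InfoStruct Ω μ} (hQr : Qr.Q = revExpFun P A i)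
include hQr

lemma isStrategy_revStrat (hzero : ∀ a ω, a ∉ A i → P i a ω = 0) :
    IsStrategy Qr (A i) (revStrat P A i) := by
  intro γ hγ
  have hpos : 0 < revExpFun P A i γ :=
    (revExpFun_nonneg γ).lt_of_ne (hQr ▸ Function.mem_support.1 hγ).symm
  refine ⟨fun a => ?_, fun a ha => if_neg fun h => ?_, ?_⟩
  · unfold revStrat
    split_ifs with h
    exacts [div_nonneg h.1.le hpos.le, le_rfl]
  · simp [margP, fun ω => hzero a ω ha] at h
  · simp only [revStrat]
    rw [Finset.sum_ite, Finset.sum_const_zero, add_zero, ← Finset.sum_div]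
    exact div_self hpos.ne'

lemma genSDSC_revStrat (hP : ∀ a ω, 0 ≤ P i a ω) (ha : a ∈ A i) (ω : Ω) :
    genSDSC Qr (revStrat P A i) a ω = P i a ω := by
  rw [genSDSC, ← margP_mul_revPost (hP a)]
  by_cases hpos : 0 < margP P i a
  · have hmass : 0 < Qr.Q (revPost P i a) :=
      hQr ▸ hpos.trans_le (margP_le_revExpFun_revPost ha hpos)
    rw [Finset.sum_eq_single_of_mem (revPost P i a)
      ((Set.Finite.mem_toFinset _).2 hmass.ne') fun γ _ hγ => by
        rw [revStrat, if_neg fun h => hγ h.2.symm, zero_mul, zero_mul]]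
    rw [revStrat, if_pos ⟨hpos, rfl⟩, ← hQr, div_mul_cancel₀ _ hmass.ne']
  · rw [Finset.sum_eq_zero fun γ _ => by
      rw [revStrat, if_neg fun h => hpos h.1, zero_mul, zero_mul]]
    rw [le_antisymm (not_lt.1 hpos) (Finset.sum_nonneg fun ω _ => hP a ω), zero_mul]

lemma sum_revExp_mul (f : (Ω → ℝ) → ℝ) :
    ∑ γ ∈ Qr.finite_support.toFinset, Qr.Q γ * f γ =
      ∑ a ∈ (A i).filter (0 < margP P i ·), margP P i a * f (revPost P i a) := by
  have hmaps : ∀ a ∈ (A i).filter (0 < margP P i ·),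
      revPost P i a ∈ Qr.finite_support.toFinset := fun a ha => by
    obtain ⟨ha, hpos⟩ := Finset.mem_filter.1 ha
    rw [Set.Finite.mem_toFinset, Function.mem_support, hQr]
    exact (hpos.trans_le (margP_le_revExpFun_revPost ha hpos)).ne'
  rw [← Finset.sum_fiberwise_of_maps_to hmaps]
  refine Finset.sum_congr rfl fun γ _ => ?_
  rw [hQr, revExpFun, Finset.sum_mul, Finset.filter_filter]
  exact Finset.sum_congr rfl fun a ha => by rw [(Finset.mem_filter.1 ha).2.2]

lemma indirect_revealed_le (u : X → ℝ) (hP : ∀ a ω, 0 ≤ P i a ω) {Qs : InfoStruct Ω μ}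
    {q : (Ω → ℝ) → 𝒜 → ℝ} (hq : IsStrategy Qs (A i) q)
    (hgen : ∀ a ∈ A i, ∀ ω, genSDSC Qs q a ω = P i a ω)
    {C : Finset 𝒜} (hC : C.Nonempty) (x : 𝒜 → Ω → X) :
    indirect u Qr C x ≤ indirect u Qs C x := by
  set S := Qs.finite_support.toFinset
  have hS : ∀ γ ∈ S, γ ∈ Function.support Qs.Q := fun γ hγ => (Set.Finite.mem_toFinset _).1 hγ
  have hmarg_nonneg : ∀ a, 0 ≤ margP P i a := fun a => Finset.sum_nonneg fun ω _ => hP a ω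
  rw [indirect_eq_sum_sup' u Qr hC x, indirect_eq_sum_sup' u Qs hC x,
    sum_revExp_mul hQr fun γ => C.sup' hC (postEU u x · γ),
    Finset.sum_filter_of_ne fun a _ h => ?_]
  swap
  · exact (hmarg_nonneg a).lt_of_ne (left_ne_zero_of_mul h).symm
  set V : (Ω → ℝ) → ℝ := fun γ => C.sup' hC (postEU u x · γ)
  have hterm : ∀ a ∈ A i, margP P i a * V (revPost P i a) ≤ ∑ γ ∈ S, q γ a * Qs.Q γ * V γ := by
    intro a ha
    obtain ⟨c, hc, hc_max⟩ := Finset.exists_mem_eq_sup' hC (postEU u x · (revPost P i a))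
    calc margP P i a * V (revPost P i a)
        = margP P i a * postEU u x c (revPost P i a) := congrArg _ hc_max
      _ = ∑ ω, genSDSC Qs q a ω * u (x c ω) := by
          rw [postEU, Finset.mul_sum]
          exact Finset.sum_congr rfl fun ω _ => by
            rw [← mul_assoc, margP_mul_revPost (hP a), hgen a ha]
      _ = ∑ γ ∈ S, q γ a * Qs.Q γ * postEU u x c γ := sum_genSDSC_mul Qs q a _
      _ ≤ ∑ γ ∈ S, q γ a * Qs.Q γ * V γ :=
          Finset.sum_le_sum fun γ hγ => mul_le_mul_of_nonneg_left
            (Finset.le_sup' (postEU u x · γ) hc) (mul_nonneg ((hq γ (hS γ hγ)).1 a) (Qs.nonneg γ))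
  calc ∑ a ∈ A i, margP P i a * V (revPost P i a)
      ≤ ∑ a ∈ A i, ∑ γ ∈ S, q γ a * Qs.Q γ * V γ := Finset.sum_le_sum hterm
    _ = ∑ γ ∈ S, Qs.Q γ * V γ := by
      rw [Finset.sum_comm]
      refine Finset.sum_congr rfl fun γ hγ => ?_
      rw [← Finset.sum_mul, ← Finset.sum_mul, (hq γ (hS γ hγ)).2.2, one_mul]

end Revealed

theorem ccr_with_revealed_general [Fintype Ω]
    (μ : Ω → ℝ) (u : X → ℝ) (A : D → Finset 𝒜) (hA : ∀ i, (A i).Nonempty)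
    (x : D → 𝒜 → Ω → X) (P : D → 𝒜 → Ω → ℝ)
    (hP : IsSDSC μ A P)
    (hCCR : CCR u μ A x P)
    (Qr : D → InfoStruct Ω μ) (hQr : ∀ i, (Qr i).Q = revExpFun P A i) :
    ∀ i : D, IsStrategy (Qr i) (A i) (revStrat P A i) ∧
      (∀ a ∈ A i, ∀ ω, genSDSC (Qr i) (revStrat P A i) a ω = P i a ω) ∧
      gross u (Qr i) (A i) (revStrat P A i) (x i) = indirect u (Qr i) (A i) (x i) ∧
      ∀ Q ∈ Set.range Qr, indirect u (Qr i) (A i) (x i) ≥ indirect u Q (A i) (x i) := by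
  intro i
  obtain ⟨hP_nonneg, -, hP_zero, -⟩ := hP
  obtain ⟨𝒬, Qi, qi, hrep⟩ := hCCR
  have hle : ∀ j, indirect u (Qr j) (A i) (x i) ≤ indirect u (Qi j) (A i) (x i) := fun j =>
    indirect_revealed_le (hQr j) u (hP_nonneg j) (hrep j).2.1 (hrep j).2.2.1 (hA i) (x i)
  obtain ⟨-, -, hgen_i, hopt_i, hbest_i⟩ := hrep i
  have hgen : ∀ a ∈ A i, ∀ ω, genSDSC (Qr i) (revStrat P A i) a ω = P i a ω :=
    fun a ha => genSDSC_revStrat (hQr i) (hP_nonneg i) ha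
  have hstrat := isStrategy_revStrat (hQr i) (hP_zero i)
  have hgross : gross u (Qr i) (A i) (revStrat P A i) (x i) = indirect u (Qi i) (A i) (x i) :=
    hopt_i ▸ gross_congr_of_genSDSC_eq u
      (fun a ha ω => (hgen a ha ω).trans (hgen_i a ha ω).symm) _
  have hind : indirect u (Qr i) (A i) (x i) = indirect u (Qi i) (A i) (x i) :=
    (hle i).antisymm (hgross ▸ gross_le_indirect u (Qr i) (hA i) hstrat (x i))
  refine ⟨hstrat, hgen, hgross.trans hind.symm, ?_⟩
  rintro _ ⟨j, rfl⟩
  exact hind ▸ (hle j).trans (hbest_i _ (hrep j).1)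

/-- If `P` has a capacity-constrained learning representation, then it has one whose
feasible set is the collection of revealed experiments `{Q_i^P : i ∈ D}` and in which
each decision problem `i` is represented by `(Q_i^P, q_i^P)`. -/
theorem ccr_with_revealed [Fintype Ω] [Fintype 𝒜] [Fintype D]
    (μ : Ω → ℝ) (u : X → ℝ) (A : D → Finset 𝒜) (hA : ∀ i, (A i).Nonempty)
    (x : D → 𝒜 → Ω → X) (P : D → 𝒜 → Ω → ℝ)
    (hμ : IsPrior μ) (hP : IsSDSC μ A P)
    (hCCR : CCR u μ A x P)
    (Qr : D → InfoStruct Ω μ) (hQr : ∀ i, (Qr i).Q = revExpFun P A i) :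
    ∀ i : D, IsStrategy (Qr i) (A i) (revStrat P A i) ∧
      (∀ a ∈ A i, ∀ ω, genSDSC (Qr i) (revStrat P A i) a ω = P i a ω) ∧
      gross u (Qr i) (A i) (revStrat P A i) (x i) = indirect u (Qr i) (A i) (x i) ∧
      ∀ Q ∈ Set.range Qr, indirect u (Qr i) (A i) (x i) ≥ indirect u Q (A i) (x i) :=
  ccr_with_revealed_general μ u A hA x P hP hCCR Qr hQr
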